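/- Let G be a metric graph embedded in ℝⁿ with straight-line edges, finitely many vertices and edges, and shortest edge length l > 0. Then the geodesic feature size τ_G of G satisfies 0 < τ_G ≤ l/2. -/

import Mathlib

/-!
Upper bound: the endpoints of a shortest edge are at Euclidean distance `l`, and `d_G` dominates
the Euclidean distance, so no admissible `r` exceeds `l / 2`.

Positivity: for two segments `K₁, K₂`, the pairs in `K₁ × K₂` that cannot be joined through a
common point by a broken line of length `< l` form a compact set missing the diagonal, so they are
a uniform distance apart. Taking the minimum over the finitely many pairs of edges gives an
admissible `r > 0`.
-/

noncomputable section
open scoped ENNReal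
open Metric Set

abbrev E (n : ℕ) := EuclideanSpace ℝ (Fin n)

/-- The geometric realization of a straight-line graph: the union of its
edge segments. -/
def graphSet {n : ℕ} (Ed : Finset (E n × E n)) : Set (E n) :=
  ⋃ e ∈ Ed, segment ℝ e.1 e.2

/-- The graph with vertex set `V` and straight-line edges `Ed` is embedded:
edges are nondegenerate segments between vertices, two distinct edges meet
only in common endpoints, and no vertex lies in the interior of an edge. -/
def IsEmbeddedGraph {n : ℕ} (V : Finset (E n)) (Ed : Finset (E n × E n)) : Prop :=
  (∀ e ∈ Ed, e.1 ∈ V ∧ e.2 ∈ V ∧ e.1 ≠ e.2) ∧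
  (∀ e ∈ Ed, ∀ e' ∈ Ed, e ≠ e' →
      segment ℝ e.1 e.2 ∩ segment ℝ e'.1 e'.2 ⊆ ({e.1, e.2} : Set (E n)) ∩ {e'.1, e'.2}) ∧
  (∀ v ∈ V, ∀ e ∈ Ed, v ∈ segment ℝ e.1 e.2 → v = e.1 ∨ v = e.2)

/-- The intrinsic (geodesic) distance in a set `G`: the infimum of lengths
(total variations) of continuous paths in `G` from `x` to `y`. -/
def dG {n : ℕ} (G : Set (E n)) (x y : E n) : ℝ≥0∞ :=
  ⨅ (γ : ℝ → E n) (_ : ContinuousOn γ (Set.Icc 0 1))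
    (_ : Set.MapsTo γ (Set.Icc 0 1) G) (_ : γ 0 = x) (_ : γ 1 = y),
    eVariationOn γ (Set.Icc 0 1)

/-- `l` is the length of the shortest edge of `Ed`. -/
def IsMinEdgeLength {n : ℕ} (Ed : Finset (E n × E n)) (l : ℝ) : Prop :=
  (∀ e ∈ Ed, l ≤ dist e.1 e.2) ∧ ∃ e ∈ Ed, dist e.1 e.2 = l

/-- The geodesic feature size of `G` (with shortest edge length `l`): the
supremum of all `r > 0` such that `‖x - y‖ < 2r` implies `d_G(x,y) < l`. -/
def gfs {n : ℕ} (G : Set (E n)) (l : ℝ) : ℝ :=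
  sSup {r : ℝ | 0 < r ∧ ∀ x ∈ G, ∀ y ∈ G,
    dist x y < 2 * r → dG G x y < ENNReal.ofReal l}

open Filter Topology AffineMap

lemma isCompact_segment {F : Type*} [AddCommGroup F] [Module ℝ F] [TopologicalSpace F]
    [IsTopologicalAddGroup F] [ContinuousSMul ℝ F] (x y : F) : IsCompact (segment ℝ x y) := by
  rw [segment_eq_image_lineMap]
  exact isCompact_Icc.image (lineMap_continuous (R := ℝ))

lemma IsCompact.eventually_exists_mem_inter_dist_add_dist_lt {X : Type*} [MetricSpace X]
    {K₁ K₂ : Set X} (h₁ : IsCompact K₁) (h₂ : IsCompact K₂) {l : ℝ} (hl : 0 < l) :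
    ∀ᶠ δ in 𝓝[>] 0, ∀ x ∈ K₁, ∀ y ∈ K₂, dist x y < δ →
      ∃ v ∈ K₁ ∩ K₂, dist x v + dist v y < l := by
  set A := K₁ ×ˢ K₂ ∩ ⋂ v ∈ K₁ ∩ K₂, {p : X × X | l ≤ dist p.1 v + dist v p.2}
  have hA : IsCompact A := (h₁.prod h₂).inter_right <|
    isClosed_biInter fun v _ => isClosed_le continuous_const (by fun_prop)
  have hpos : ∀ p ∈ A, 0 < dist p.1 p.2 := by
    rintro ⟨x, y⟩ ⟨⟨hx, hy⟩, hfar⟩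
    refine dist_pos.2 fun hxy => ?_
    obtain rfl : x = y := hxy
    have : l ≤ dist x x + dist x x := mem_iInter₂.1 hfar x ⟨hx, hy⟩
    rw [dist_self, add_zero] at this
    linarith
  obtain ⟨δ, hδ, hle⟩ := hA.exists_forall_le' continuous_dist.continuousOn hpos
  filter_upwards [Ioc_mem_nhdsGT hδ] with r hr x hx y hy hxy
  by_contra! hfar
  have hmem : (x, y) ∈ A := ⟨⟨hx, hy⟩, mem_iInter₂.2 hfar⟩
  linarith [hle _ hmem, hr.2]

lemma eVariationOn_lineMap_comp_le {F : Type*} [NormedAddCommGroup F] [NormedSpace ℝ F]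
    (x y : F) {φ : ℝ → ℝ} {s : Set ℝ} (hφ : MonotoneOn φ s) (hmaps : MapsTo φ s (Icc 0 1)) :
    eVariationOn (lineMap x y ∘ φ) s ≤ edist x y := by
  have hid : eVariationOn id (Icc (0 : ℝ) 1) = ENNReal.ofReal (1 - 0) := by
    simpa only [univ_inter, Icc_inter_Icc, le_refl, max_eq_left, min_eq_left, id_eq] using
      monotoneOn_id.eVariationOn_eq (s := Icc (0 : ℝ) 1) (a := 0) (b := 1) (by simp) (by simp)
  calc eVariationOn (lineMap x y ∘ φ) s
      ≤ eVariationOn (lineMap x y) (Icc 0 1) := eVariationOn.comp_le_of_monotoneOn _ φ hφ hmaps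
    _ ≤ nndist x y * eVariationOn id (Icc (0 : ℝ) 1) :=
        (lipschitzWith_lineMap (𝕜 := ℝ) x y).lipschitzOnWith.comp_eVariationOn_le
          (mapsTo_univ _ _)
    _ = edist x y := by rw [hid, sub_zero, ENNReal.ofReal_one, mul_one, edist_nndist]

lemma edist_le_dG {n : ℕ} (G : Set (E n)) (x y : E n) : edist x y ≤ dG G x y := by
  refine le_iInf fun γ => le_iInf fun _ => le_iInf fun _ => le_iInf fun h0 =>
    le_iInf fun h1 => ?_
  rw [← h0, ← h1]
  exact eVariationOn.edist_le γ (left_mem_Icc.2 zero_le_one) (right_mem_Icc.2 zero_le_one)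

lemma dG_le_eVariationOn {n : ℕ} {G : Set (E n)} {x y : E n} (γ : ℝ → E n)
    (hγ : ContinuousOn γ (Icc 0 1)) (hmaps : MapsTo γ (Icc 0 1) G) (h0 : γ 0 = x)
    (h1 : γ 1 = y) : dG G x y ≤ eVariationOn γ (Icc 0 1) :=
  iInf_le_of_le γ <| iInf_le_of_le hγ <| iInf_le_of_le hmaps <| iInf_le_of_le h0 <|
    iInf_le_of_le h1 le_rfl

lemma dG_le_of_segment_subset {n : ℕ} {G : Set (E n)} {x v y : E n}
    (hxv : segment ℝ x v ⊆ G) (hvy : segment ℝ v y ⊆ G) :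
    dG G x y ≤ edist x v + edist v y := by
  set γ : ℝ → E n := fun t => if t ≤ 1 / 2 then lineMap x v (2 * t) else lineMap v y (2 * t - 1)
  have hfirst : EqOn γ (lineMap x v ∘ fun t => 2 * t) (Icc 0 (1 / 2)) := fun t ht =>
    if_pos ht.2
  have hsecond : EqOn γ (lineMap v y ∘ fun t => 2 * t - 1) (Icc (1 / 2) 1) := by
    intro t ht
    rcases ht.1.eq_or_lt with rfl | hlt
    · norm_num [γ]
    · exact if_neg hlt.not_ge
  have hcont : Continuous γ := by
    refine Continuous.if_le (by fun_prop) (by fun_prop) continuous_id continuous_const ?_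
    rintro t rfl
    norm_num
  have hmaps : MapsTo γ (Icc 0 1) G := by
    intro t ⟨ht0, ht1⟩
    rw [segment_eq_image_lineMap] at hxv hvy
    rcases le_or_gt t (1 / 2) with h | h
    · rw [hfirst ⟨ht0, h⟩]
      exact hxv (mem_image_of_mem _ ⟨by linarith, by linarith⟩)
    · rw [hsecond ⟨h.le, ht1⟩]
      exact hvy (mem_image_of_mem _ ⟨by linarith, by linarith⟩)
  have hsplit := eVariationOn.Icc_add_Icc γ (s := univ) (a := 0) (b := 1 / 2) (c := 1)
    (by norm_num) (by norm_num) (mem_univ _)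
  simp only [univ_inter] at hsplit
  calc dG G x y ≤ eVariationOn γ (Icc 0 1) :=
        dG_le_eVariationOn γ hcont.continuousOn hmaps (by norm_num [γ]) (by norm_num [γ])
    _ = eVariationOn γ (Icc 0 (1 / 2)) + eVariationOn γ (Icc (1 / 2) 1) := hsplit.symm
    _ ≤ edist x v + edist v y := by
        rw [eVariationOn.eq_of_eqOn hfirst, eVariationOn.eq_of_eqOn hsecond]
        gcongr
        · exact eVariationOn_lineMap_comp_le x v (fun a _ b _ hab => by linarith)
            fun t ht => ⟨by linarith [ht.1], by linarith [ht.2]⟩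
        · exact eVariationOn_lineMap_comp_le v y (fun a _ b _ hab => by linarith)
            fun t ht => ⟨by linarith [ht.1], by linarith [ht.2]⟩

lemma segment_subset_graphSet {n : ℕ} {Ed : Finset (E n × E n)} {e : E n × E n} (he : e ∈ Ed) :
    segment ℝ e.1 e.2 ⊆ graphSet Ed :=
  subset_biUnion_of_mem (u := fun e : E n × E n => segment ℝ e.1 e.2) he

lemma eventually_dG_graphSet_lt {n : ℕ} (Ed : Finset (E n × E n)) {l : ℝ} (hl : 0 < l) :
    ∀ᶠ δ in 𝓝[>] 0, ∀ x ∈ graphSet Ed, ∀ y ∈ graphSet Ed, dist x y < δ →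
      dG (graphSet Ed) x y < ENNReal.ofReal l := by
  have hpairs := (eventually_all_finset (Ed ×ˢ Ed)).2 fun p _ =>
    (isCompact_segment p.1.1 p.1.2).eventually_exists_mem_inter_dist_add_dist_lt
      (isCompact_segment p.2.1 p.2.2) hl
  filter_upwards [hpairs] with δ hδ x hx y hy hxy
  obtain ⟨e, he, hxe⟩ := mem_iUnion₂.1 hx
  obtain ⟨e', he', hye⟩ := mem_iUnion₂.1 hy
  obtain ⟨v, ⟨hve, hve'⟩, hlt⟩ := hδ (e, e') (Finset.mem_product.2 ⟨he, he'⟩) x hxe y hye hxy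
  calc dG (graphSet Ed) x y ≤ edist x v + edist v y := dG_le_of_segment_subset
        (((convex_segment _ _).segment_subset hxe hve).trans (segment_subset_graphSet he))
        (((convex_segment _ _).segment_subset hve' hye).trans (segment_subset_graphSet he'))
    _ = ENNReal.ofReal (dist x v + dist v y) := by
        rw [edist_dist, edist_dist, ENNReal.ofReal_add dist_nonneg dist_nonneg]
    _ < ENNReal.ofReal l := (ENNReal.ofReal_lt_ofReal_iff hl).2 hlt

section FeatureSize

variable {n : ℕ} {G : Set (E n)} {x₀ y₀ : E n}

lemma le_half_dist_of_forall_dG_lt (hx₀ : x₀ ∈ G) (hy₀ : y₀ ∈ G) {r : ℝ}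
    (hr : ∀ x ∈ G, ∀ y ∈ G, dist x y < 2 * r → dG G x y < ENNReal.ofReal (dist x₀ y₀)) :
    r ≤ dist x₀ y₀ / 2 := by
  by_contra! h
  have := (edist_le_dG G x₀ y₀).trans_lt (hr x₀ hx₀ y₀ hy₀ (by linarith))
  rw [edist_dist] at this
  exact lt_irrefl _ this

lemma gfs_le_half_dist (hx₀ : x₀ ∈ G) (hy₀ : y₀ ∈ G) : gfs G (dist x₀ y₀) ≤ dist x₀ y₀ / 2 :=
  Real.sSup_le (fun _ hr => le_half_dist_of_forall_dG_lt hx₀ hy₀ hr.2) (by positivity)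

lemma gfs_pos (hx₀ : x₀ ∈ G) (hy₀ : y₀ ∈ G) {δ : ℝ} (hδ : 0 < δ)
    (hnear : ∀ x ∈ G, ∀ y ∈ G, dist x y < δ → dG G x y < ENNReal.ofReal (dist x₀ y₀)) :
    0 < gfs G (dist x₀ y₀) :=
  (half_pos hδ).trans_le <| le_csSup
    ⟨dist x₀ y₀ / 2, fun _ hr => le_half_dist_of_forall_dG_lt hx₀ hy₀ hr.2⟩
    ⟨half_pos hδ, fun x hx y hy hxy => hnear x hx y hy (by linarith)⟩

end FeatureSize

theorem stmt4_general {n : ℕ} (Ed : Finset (E n × E n))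
    (l : ℝ) (hl : IsMinEdgeLength Ed l) (hl0 : 0 < l) :
    0 < gfs (graphSet Ed) l ∧ gfs (graphSet Ed) l ≤ l / 2 := by
  obtain ⟨e, he, rfl⟩ := hl.2
  have hx : e.1 ∈ graphSet Ed := segment_subset_graphSet he (left_mem_segment ℝ _ _)
  have hy : e.2 ∈ graphSet Ed := segment_subset_graphSet he (right_mem_segment ℝ _ _)
  obtain ⟨δ, hnear, hδ⟩ := ((eventually_dG_graphSet_lt Ed hl0).and self_mem_nhdsWithin).exists
  exact ⟨gfs_pos hx hy hδ hnear, gfs_le_half_dist hx hy⟩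

/-- for an embedded metric graph with straight-line edges and
shortest edge length `l > 0`, the geodesic feature size satisfies
`0 < τ_G ≤ l/2`. -/
theorem stmt4 {n : ℕ} (V : Finset (E n)) (Ed : Finset (E n × E n))
    (hEd : Ed.Nonempty) (hemb : IsEmbeddedGraph V Ed)
    (l : ℝ) (hl : IsMinEdgeLength Ed l) (hl0 : 0 < l) :
    0 < gfs (graphSet Ed) l ∧ gfs (graphSet Ed) l ≤ l / 2 :=
  stmt4_general Ed l hl hl0
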